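/- Let T₁ and T₂ be trees of order at least three, and let v be the root vertex of T₂. Then γ_c(T₁∘T₂) = n(T₁)·γ_c(T₂) if and only if v is not an end vertex of T₂. -/

import Mathlib

open Finset
open scoped Classical

/-- `S` is a dominating set of `G`: every vertex outside `S` has a neighbor in `S`. -/
def IsDomSet {α : Type*} (G : SimpleGraph α) (S : Set α) : Prop :=
  ∀ v ∉ S, ∃ u ∈ S, G.Adj u v

/-- The domination number `γ(G)`. -/
noncomputable def domNum {α : Type*} (G : SimpleGraph α) [Fintype α] : ℕ :=
  sInf {k | ∃ S : Finset α, IsDomSet G ↑S ∧ S.card = k}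

/-- The rooted product `G ∘ H` with root `v` of `H`: one copy of `H` for each vertex of `G`,
identifying the root of the `a`-th copy with the vertex `a` of `G`. -/
def rootedProd {α β : Type*} (G : SimpleGraph α) (H : SimpleGraph β) (v : β) :
    SimpleGraph (α × β) where
  Adj x y := (x.2 = v ∧ y.2 = v ∧ G.Adj x.1 y.1) ∨ (x.1 = y.1 ∧ H.Adj x.2 y.2)
  symm := by
    refine ⟨?_⟩
    rintro x y (⟨h1, h2, h3⟩ | ⟨h1, h2⟩)
    · exact Or.inl ⟨h2, h1, h3.symm⟩
    · exact Or.inr ⟨h1.symm, h2.symm⟩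
  loopless := by
    refine ⟨?_⟩
    rintro x (⟨_, _, h⟩ | ⟨_, h⟩)
    · exact G.loopless.irrefl _ h
    · exact H.loopless.irrefl _ h

/-- The graph `G - v` obtained by deleting the vertex `v`. -/
def deleteVert {α : Type*} (G : SimpleGraph α) (v : α) : SimpleGraph {u : α // u ≠ v} :=
  SimpleGraph.comap Subtype.val G

/-- The graph `G - A` obtained by deleting a set `A` of vertices. -/
def deleteSet {α : Type*} (G : SimpleGraph α) (A : Set α) : SimpleGraph {u : α // u ∉ A} :=
  SimpleGraph.comap Subtype.val G

/-- `f` is a Roman dominating function on `G`. -/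
def IsRDF {α : Type*} (G : SimpleGraph α) (f : α → ℕ) : Prop :=
  (∀ u, f u ≤ 2) ∧ ∀ u, f u = 0 → ∃ w, G.Adj u w ∧ f w = 2

/-- The Roman domination number `γ_R(G)`. -/
noncomputable def romanDomNum {α : Type*} (G : SimpleGraph α) [Fintype α] : ℕ :=
  sInf {k | ∃ f : α → ℕ, IsRDF G f ∧ ∑ u, f u = k}

/-- `S` is an independent set of `G`. -/
def IsIndep {α : Type*} (G : SimpleGraph α) (S : Set α) : Prop :=
  ∀ u ∈ S, ∀ w ∈ S, ¬ G.Adj u w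

/-- The independence number `α(G)`. -/
noncomputable def indepNum {α : Type*} (G : SimpleGraph α) [Fintype α] : ℕ :=
  sSup {k | ∃ S : Finset α, IsIndep G ↑S ∧ S.card = k}

/-- The independent domination number `i(G)`. -/
noncomputable def indepDomNum {α : Type*} (G : SimpleGraph α) [Fintype α] : ℕ :=
  sInf {k | ∃ S : Finset α, IsDomSet G ↑S ∧ IsIndep G ↑S ∧ S.card = k}

/-- `S` is a connected dominating set of `G`. -/
def IsConnDomSet {α : Type*} (G : SimpleGraph α) (S : Set α) : Prop :=
  IsDomSet G S ∧ (G.induce S).Connected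

/-- The connected domination number `γ_c(G)`. -/
noncomputable def connDomNum {α : Type*} (G : SimpleGraph α) [Fintype α] : ℕ :=
  sInf {k | ∃ S : Finset α, IsConnDomSet G ↑S ∧ S.card = k}

/-- `D` is a super dominating set of `G`: every `w ∉ D` has a neighbor `u ∈ D` with
`N(u) ⊆ D ∪ {w}`. -/
def IsSuperDomSet {α : Type*} (G : SimpleGraph α) (D : Set α) : Prop :=
  ∀ w ∉ D, ∃ u ∈ D, G.Adj u w ∧ ∀ x, G.Adj u x → x ∈ D ∪ {w}

/-- The super domination number `γ_sp(G)`. -/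
noncomputable def superDomNum {α : Type*} (G : SimpleGraph α) [Fintype α] : ℕ :=
  sInf {k | ∃ S : Finset α, IsSuperDomSet G ↑S ∧ S.card = k}

/-- The number of end vertices (vertices of degree one) of `G`, denoted `n₁(G)`. -/
noncomputable def endVertCount {α : Type*} (G : SimpleGraph α) [Fintype α] : ℕ :=
  Nat.card {u : α // G.degree u = 1}

/-! In a tree of order at least three the non-leaf vertices form a connected dominating set,
and every connected dominating set `S` contains each non-leaf vertex `u`: a neighbour of `u` in
`S` and another neighbour of `u` (in `S` or dominated by `S`) are joined by a walk through `S`,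
which in a tree must pass through `u`. Hence `γ_c` of such a tree is its number of non-leaf
vertices. The rooted product of two trees is again a tree; its non-leaf vertices are all copies
of non-leaf vertices of `T₂` together with all `n(T₁)` copies of the root, which have neighbours
both in `T₁` and in `T₂`. So `γ_c(T₁∘T₂)` exceeds `n(T₁)·γ_c(T₂)` by `n(T₁)` when `v` is a leaf,
and equals it otherwise. -/

lemma IsConnDomSet.exists_walk_support_subset {V : Type*} {G : SimpleGraph V} {S : Set V}
    (hS : IsConnDomSet G S) {s : V} (hs : s ∈ S) (y : V) :
    ∃ W : G.Walk s y, ∀ x ∈ W.support, x ∈ S ∨ x = y := by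
  have walk_within : ∀ x ∈ S, ∃ W : G.Walk s x, ∀ z ∈ W.support, z ∈ S := fun x hx => by
    obtain ⟨W⟩ := hS.2.preconnected ⟨s, hs⟩ ⟨x, hx⟩
    refine ⟨W.map (SimpleGraph.Embedding.induce S).toHom, fun z hz => ?_⟩
    obtain ⟨z', -, rfl⟩ := List.mem_map.mp ((W.support_map _).symm ▸ hz)
    exact z'.2
  by_cases hy : y ∈ S
  · obtain ⟨W, hW⟩ := walk_within y hy
    exact ⟨W, fun x hx => .inl (hW x hx)⟩
  · obtain ⟨x, hx, hxy⟩ := hS.1 y hy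
    obtain ⟨W, hW⟩ := walk_within x hx
    refine ⟨W.concat hxy, fun z hz => ?_⟩
    rw [SimpleGraph.Walk.support_concat, List.mem_append, List.mem_singleton] at hz
    exact hz.imp (hW z) id

namespace SimpleGraph

variable {V : Type*} {G : SimpleGraph V}

noncomputable def internalVerts (G : SimpleGraph V) [Fintype V] : Finset V :=
  {u | 2 ≤ G.degree u}

@[simp]
lemma mem_internalVerts [Fintype V] {u : V} : u ∈ G.internalVerts ↔ 2 ≤ G.degree u := by
  simp [internalVerts]

lemma Connected.degree_pos [Fintype V] (hG : G.Connected) (hV : 2 ≤ Fintype.card V) (u : V) :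
    0 < G.degree u :=
  have : Nontrivial V := Fintype.one_lt_card_iff_nontrivial.mp hV
  hG.preconnected.degree_pos_of_nontrivial u

/-- Deleting the leaf `u` leaves a connected graph with a vertex other than `w`, so `w` has a
neighbour besides `u`. -/
lemma Connected.two_le_degree_of_adj_of_degree_eq_one [Fintype V] (hG : G.Connected)
    (hV : 3 ≤ Fintype.card V) {u w : V} (hu : G.degree u = 1) (huw : G.Adj u w) :
    2 ≤ G.degree w := by
  by_contra! hw
  have hw : G.degree w = 1 := by have := hG.degree_pos (by omega) w; omega
  obtain ⟨u', -, hu'⟩ := degree_eq_one_iff_existsUnique_adj.mp hw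
  obtain ⟨x, -, hx⟩ := Finset.exists_mem_notMem_of_card_lt_card
    (s := {u, w}) (t := Finset.univ) (by grind [Finset.card_le_two, Finset.card_univ])
  obtain ⟨hxu, hxw⟩ : x ≠ u ∧ x ≠ w := by simpa [not_or] using hx
  obtain ⟨p⟩ := (hG.induce_compl_singleton_of_degree_eq_one hu).preconnected
    ⟨w, huw.ne'⟩ ⟨x, hxu⟩
  have hy := p.adj_snd (Walk.not_nil_of_ne (by simpa [Subtype.ext_iff] using hxw.symm))
  exact p.snd.2 ((hu' _ (induce_adj.mp hy)).trans (hu' _ huw.symm).symm)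

lemma Connected.isDomSet_internalVerts [Fintype V] (hG : G.Connected)
    (hV : 3 ≤ Fintype.card V) : IsDomSet G G.internalVerts := by
  intro w hw
  have hw : G.degree w = 1 := by
    have := hG.degree_pos (by omega) w
    simp only [Finset.mem_coe, mem_internalVerts] at hw
    omega
  obtain ⟨x, hwx⟩ := (G.degree_pos_iff_exists_adj w).mp (by omega)
  exact ⟨x, mem_internalVerts.mpr (hG.two_le_degree_of_adj_of_degree_eq_one hV hw hwx), hwx.symm⟩

lemma Connected.induce_internalVerts_connected [Fintype V] (hG : G.Connected)
    (hV : 3 ≤ Fintype.card V) : (G.induce G.internalVerts).Connected := by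
  rw [connected_iff]
  refine ⟨hG.preconnected.induce_of_degree_eq_one fun u hu x hx y hy => ?_, ?_⟩
  · have hu : (G.neighborFinset u).card ≤ 1 := by
      rw [card_neighborFinset_eq_degree]; simpa using hu
    exact Finset.card_le_one.mp hu x (by simpa using hx) y (by simpa using hy)
  · obtain ⟨u⟩ := hG.nonempty
    by_cases hu : u ∈ G.internalVerts
    · exact ⟨⟨u, hu⟩⟩
    · obtain ⟨x, hx, -⟩ := hG.isDomSet_internalVerts hV u hu
      exact ⟨⟨x, hx⟩⟩

/-- The only path from `s` to `t` in a tree is `s u t`, and a walk contains its bypass. -/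
lemma IsTree.mem_support_of_adj_of_adj (hG : G.IsTree) {s u t : V} (hsu : G.Adj s u)
    (hut : G.Adj u t) (hst : s ≠ t) (W : G.Walk s t) : u ∈ W.support := by
  have hpath : (Walk.cons hsu (Walk.cons hut Walk.nil)).IsPath := by
    simp [hsu.ne, hut.ne, hst]
  have hbypass := (hG.existsUnique_path s t).unique W.bypass_isPath hpath
  exact W.support_bypass_subset_support (by simp [hbypass])

lemma IsTree.internalVerts_subset [Fintype V] (hG : G.IsTree) {S : Set V}
    (hS : IsConnDomSet G S) : ↑G.internalVerts ⊆ S := by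
  intro u hu
  by_contra huS
  obtain ⟨s, hs, hsu⟩ := hS.1 u huS
  obtain ⟨t, ht, hts⟩ := Finset.exists_mem_ne (s := G.neighborFinset u)
    (by simpa [Nat.lt_iff_add_one_le] using hu) s
  rw [mem_neighborFinset] at ht
  obtain ⟨W, hW⟩ := hS.exists_walk_support_subset hs t
  rcases hW u (hG.mem_support_of_adj_of_adj hsu ht hts.symm W) with h | h
  · exact huS h
  · exact ht.ne h

lemma IsTree.connDomNum_eq_card_internalVerts [Fintype V] (hG : G.IsTree)
    (hV : 3 ≤ Fintype.card V) : connDomNum G = #G.internalVerts := by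
  refine IsLeast.csInf_eq ⟨⟨G.internalVerts, ⟨hG.connected.isDomSet_internalVerts hV,
    hG.connected.induce_internalVerts_connected hV⟩, rfl⟩, ?_⟩
  rintro k ⟨S, hS, rfl⟩
  exact Finset.card_le_card (by exact_mod_cast hG.internalVerts_subset hS)

end SimpleGraph

section RootedProduct

open SimpleGraph

variable {α β : Type*} {G : SimpleGraph α} {H : SimpleGraph β} {v : β}

@[simp]
lemma rootedProd_adj {x y : α × β} :
    (rootedProd G H v).Adj x y ↔ x.2 = v ∧ y.2 = v ∧ G.Adj x.1 y.1 ∨ x.1 = y.1 ∧ H.Adj x.2 y.2 :=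
  Iff.rfl

lemma rootedProd_degree [Fintype α] [Fintype β] (a : α) (b : β) :
    (rootedProd G H v).degree (a, b) = (if b = v then G.degree a else 0) + H.degree b := by
  have hnbr : (rootedProd G H v).neighborFinset (a, b) =
      (if b = v then G.neighborFinset a ×ˢ {v} else ∅) ∪ {a} ×ˢ H.neighborFinset b := by
    ext ⟨c, d⟩
    split_ifs with hb <;> simp [hb, eq_comm, and_comm]
  have hdisj : Disjoint (if b = v then G.neighborFinset a ×ˢ {v} else ∅)
      ({a} ×ˢ H.neighborFinset b) := by
    split_ifs
    · simp only [Finset.disjoint_left, Finset.mem_product, mem_neighborFinset,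
        Finset.mem_singleton, not_and, and_imp, Prod.forall]
      rintro c - hac - rfl -
      exact hac.ne rfl
    · exact Finset.disjoint_empty_left _
  rw [← card_neighborFinset_eq_degree, hnbr, Finset.card_union_of_disjoint hdisj]
  split_ifs <;> simp

lemma rootedProd_connected (hG : G.Connected) (hH : H.Connected) :
    (rootedProd G H v).Connected := by
  have : Nonempty (α × β) := ⟨(hG.nonempty.some, hH.nonempty.some)⟩
  let base : G →g rootedProd G H v := ⟨fun a => (a, v), fun h => .inl ⟨rfl, rfl, h⟩⟩
  let fiber (a : α) : H →g rootedProd G H v := ⟨fun b => (a, b), fun h => .inr ⟨rfl, h⟩⟩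
  refine ⟨fun ⟨a, b⟩ ⟨c, d⟩ => ?_⟩
  exact (((hH.preconnected b v).map (fiber a)).trans ((hG.preconnected a c).map base)).trans
    ((hH.preconnected v d).map (fiber c))

/-- Summing degrees, `G ∘ H` has `|E(G)| + n(G)·|E(H)| = n(G)·n(H) - 1` edges. -/
lemma rootedProd_isTree [Fintype α] [Fintype β] (hG : G.IsTree) (hH : H.IsTree) :
    (rootedProd G H v).IsTree := by
  have hedges : #(rootedProd G H v).edgeFinset =
      #G.edgeFinset + Fintype.card α * #H.edgeFinset := by
    apply Nat.eq_of_mul_eq_mul_left two_pos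
    rw [← sum_degrees_eq_twice_card_edges, Fintype.sum_prod_type]
    simp only [rootedProd_degree, Finset.sum_add_distrib, Finset.sum_ite_eq', Finset.mem_univ,
      if_true, sum_degrees_eq_twice_card_edges, Finset.sum_const, Finset.card_univ, smul_eq_mul]
    ring
  rw [isTree_iff_connected_and_card, Nat.card_eq_fintype_card, ← edgeFinset_card, hedges,
    Nat.card_eq_fintype_card, Fintype.card_prod, ← hG.card_edgeFinset, ← hH.card_edgeFinset]
  exact ⟨rootedProd_connected hG.connected hH.connected, by ring⟩

lemma internalVerts_rootedProd [Fintype α] [Fintype β] (hG : G.Connected)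
    (hα : 2 ≤ Fintype.card α) (hH : H.Connected) (hβ : 2 ≤ Fintype.card β) :
    (rootedProd G H v).internalVerts = Finset.univ ×ˢ insert v H.internalVerts := by
  ext ⟨a, b⟩
  have := hG.degree_pos hα a
  have := hH.degree_pos hβ b
  rcases eq_or_ne b v with rfl | hb
  · simpa [rootedProd_degree] using (by omega : 2 ≤ G.degree a + H.degree b)
  · simp [rootedProd_degree, hb]

end RootedProduct

/-- for trees `T₁, T₂` of order at least three with root `v` of `T₂`,
`γ_c(T₁∘T₂) = n(T₁)·γ_c(T₂)` iff `v` is not an end vertex of `T₂`. -/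
theorem stmt18 {α β : Type*} [Fintype α] [Fintype β]
    (T₁ : SimpleGraph α) (T₂ : SimpleGraph β) (v : β)
    (h₁ : T₁.IsTree) (h₂ : T₂.IsTree)
    (hn : 3 ≤ Fintype.card α) (hm : 3 ≤ Fintype.card β) :
    connDomNum (rootedProd T₁ T₂ v) = Fintype.card α * connDomNum T₂ ↔
      ¬ T₂.degree v = 1 := by
  have hnm : 3 ≤ Fintype.card (α × β) :=
    Fintype.card_prod α β ▸ hm.trans (Nat.le_mul_of_pos_left _ (by omega))
  rw [(rootedProd_isTree h₁ h₂).connDomNum_eq_card_internalVerts hnm,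
    h₂.connDomNum_eq_card_internalVerts hm,
    internalVerts_rootedProd h₁.connected (by omega) h₂.connected (by omega),
    Finset.card_product, Finset.card_univ, Nat.mul_right_inj (by omega), Finset.card_insert_eq_ite]
  have := h₂.connected.degree_pos (by omega) v
  split_ifs with hv <;> rw [SimpleGraph.mem_internalVerts] at hv <;> omega
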